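/- arXiv:1902.02951 — 2 statements merged into one kernel-verified Lean document; each statement's English description precedes it below -/
import Mathlib

section
/- For every L > 0 there exist constants R2 > 0 and H2 > 0, depending only on α, t0, ϑ and L, such that for every h > 0 and every y : [t0,ϑ] → ℝ^n with y(t0) = 0 that is Lipschitz with constant L, the function z(t) = h^{α−1}·(Δ_h^{1−α} y)(t) satisfies ‖z(t)‖ ≤ R2 and ‖z(t) − z(t′)‖ ≤ H2·|t − t′|^α for all t, t′ ∈ [t0,ϑ]. -/
open MeasureTheory Set
open scoped RealInnerProductSpace NNReal

noncomputable section

/-- `ℝ^n`. -/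
abbrev Evec (n : ℕ) := EuclideanSpace ℝ (Fin n)

/-- The Riemann–Liouville fractional integral of order `β` with basepoint `t0`:
`(I^β φ)(t) = (1/Γ(β)) ∫_{t0}^{t} (t-τ)^{β-1} φ(τ) dτ`. -/
def RL (t0 β : ℝ) {n : ℕ} (φ : ℝ → Evec n) (t : ℝ) : Evec n :=
  (1 / Real.Gamma β) • ∫ τ in t0..t, ((t - τ) ^ (β - 1)) • φ τ

/-- The Mittag-Leffler function `E_α(z) = ∑_{k} z^k / Γ(αk+1)`. -/
def ML (α z : ℝ) : ℝ := ∑' k : ℕ, z ^ k / Real.Gamma (α * k + 1)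

/-- The binomial coefficient `binom(β, i) = ∏_{j=0}^{i-1} (β-j)/(j+1)`. -/
def glCoef (β : ℝ) (i : ℕ) : ℝ := ∏ j ∈ Finset.range i, ((β - (j : ℝ)) / ((j : ℝ) + 1))

/-- The Grünwald–Letnikov fractional difference
`(Δ_h^{1-α} y)(t) = ∑_{i=0}^{⌊(t-t0)/h⌋} (-1)^i binom(1-α, i) y(t - i h)`. -/
def glDiff (t0 α h : ℝ) {n : ℕ} (y : ℝ → Evec n) (t : ℝ) : Evec n :=
  ∑ i ∈ Finset.range (⌊(t - t0) / h⌋₊ + 1),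
    ((-1 : ℝ) ^ i * glCoef (1 - α) i) • y (t - (i : ℝ) * h)

/-- The state `w0 + h^{α-1} (Δ_h^{1-α} y)(t)` of the original system reconstructed
from the state `y` of the approximating system. -/
def approxState (t0 α h : ℝ) {n : ℕ} (w0 : Evec n) (y : ℝ → Evec n) (t : ℝ) : Evec n :=
  w0 + (h ^ (α - 1)) • glDiff t0 α h y t

/-- Condition (A.1): `f` is continuous. -/
def CondA1 (t0 ϑ : ℝ) {n r s : ℕ} (U : Set (Evec r)) (V : Set (Evec s))
    (f : ℝ → Evec n → Evec r → Evec s → Evec n) : Prop :=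
  ContinuousOn (fun z : ℝ × Evec n × Evec r × Evec s => f z.1 z.2.1 z.2.2.1 z.2.2.2)
    ((Icc t0 ϑ) ×ˢ (univ : Set (Evec n)) ×ˢ U ×ˢ V)

/-- Condition (A.2): `f` is locally Lipschitz in the state variable, uniformly in the rest. -/
def CondA2 (t0 ϑ : ℝ) {n r s : ℕ} (U : Set (Evec r)) (V : Set (Evec s))
    (f : ℝ → Evec n → Evec r → Evec s → Evec n) : Prop :=
  ∀ R : ℝ, 0 ≤ R → ∃ lam > (0 : ℝ), ∀ t ∈ Icc t0 ϑ, ∀ x x' : Evec n, ‖x‖ ≤ R → ‖x'‖ ≤ R →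
    ∀ u ∈ U, ∀ v ∈ V, ‖f t x u v - f t x' u v‖ ≤ lam * ‖x - x'‖

/-- Condition (A.3): sublinear growth `‖f(t,x,u,v)‖ ≤ (1+‖x‖)c`. -/
def CondA3 (t0 ϑ : ℝ) {n r s : ℕ} (U : Set (Evec r)) (V : Set (Evec s))
    (f : ℝ → Evec n → Evec r → Evec s → Evec n) (c : ℝ) : Prop :=
  ∀ t ∈ Icc t0 ϑ, ∀ x : Evec n, ∀ u ∈ U, ∀ v ∈ V, ‖f t x u v‖ ≤ (1 + ‖x‖) * c

/-- Condition (A.4): the saddle point condition in a small game (Isaacs' condition). -/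
def CondA4 (t0 ϑ : ℝ) {n r s : ℕ} (U : Set (Evec r)) (V : Set (Evec s))
    (f : ℝ → Evec n → Evec r → Evec s → Evec n) : Prop :=
  ∀ t ∈ Icc t0 ϑ, ∀ x sv : Evec n,
    sInf ((fun u => sSup ((fun v => ⟪sv, f t x u v⟫) '' V)) '' U)
      = sSup ((fun v => sInf ((fun u => ⟪sv, f t x u v⟫) '' U)) '' V)

/-- Condition (A.5): `σ` depends only on the restriction of its argument to `[t0, ϑ]` and
is continuous with respect to the uniform norm on `C([t0,ϑ], ℝ^n)`. -/
def CondA5 (t0 ϑ : ℝ) {n : ℕ} (σ : (ℝ → Evec n) → ℝ) : Prop :=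
  (∀ x x' : ℝ → Evec n, (∀ t ∈ Icc t0 ϑ, x t = x' t) → σ x = σ x') ∧
  ∀ x : ℝ → Evec n, ContinuousOn x (Icc t0 ϑ) → ∀ ε > (0 : ℝ), ∃ δ > (0 : ℝ),
    ∀ x' : ℝ → Evec n, ContinuousOn x' (Icc t0 ϑ) →
      (∀ t ∈ Icc t0 ϑ, ‖x t - x' t‖ ≤ δ) → |σ x - σ x'| ≤ ε

/-- An admissible position `(t, w(·))` of the original fractional system, together with the
(Caputo-derivative) witness `φ`. -/
def IsAdmissible (t0 ϑ α c R0 : ℝ) {n : ℕ} (t : ℝ) (w φ : ℝ → Evec n) : Prop :=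
  t ∈ Icc t0 ϑ ∧ ContinuousOn w (Icc t0 t) ∧ ‖w t0‖ ≤ R0 ∧
  Measurable φ ∧ (∃ K : ℝ, ∀ᵐ τ ∂(volume.restrict (Icc t0 t)), ‖φ τ‖ ≤ K) ∧
  (∀ τ ∈ Icc t0 t, w τ = w t0 + RL t0 α φ τ) ∧
  (∀ᵐ τ ∂(volume.restrict (Icc t0 t)), ‖φ τ‖ ≤ (1 + ‖w τ‖) * c)

/-- An admissible control realization on `[tstar, ϑ]` with values in `U`. -/
def IsControl {m : ℕ} (tstar ϑ : ℝ) (U : Set (Evec m)) (u : ℝ → Evec m) : Prop :=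
  Measurable u ∧ ∀ t ∈ Icc tstar ϑ, u t ∈ U

/-- The motion of the original fractional system generated from the initial position
`(tstar, wstar(·))` (with Caputo derivative `φstar`) by control realizations `u`, `v`. -/
def IsMotion (t0 ϑ α : ℝ) {n r s : ℕ} (f : ℝ → Evec n → Evec r → Evec s → Evec n)
    (tstar : ℝ) (wstar φstar : ℝ → Evec n) (u : ℝ → Evec r) (v : ℝ → Evec s)
    (x : ℝ → Evec n) : Prop :=
  ContinuousOn x (Icc t0 ϑ) ∧
  (∀ t ∈ Icc t0 tstar, x t = wstar t) ∧
  (∀ t ∈ Icc tstar ϑ, x t = wstar t0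
    + (1 / Real.Gamma α) • (∫ τ in t0..tstar, ((t - τ) ^ (α - 1)) • φstar τ)
    + (1 / Real.Gamma α) • (∫ τ in tstar..t, ((t - τ) ^ (α - 1)) • f τ (x τ) (u τ) (v τ)))

/-- The motion of the approximating retarded-type system, with parameters `w0`, `h`,
generated from the initial position `(tstar, rstar(·))` by control realizations `p`, `q`. -/
def IsApproxMotion (t0 ϑ α : ℝ) {n r s : ℕ} (f : ℝ → Evec n → Evec r → Evec s → Evec n)
    (w0 : Evec n) (h : ℝ) (tstar : ℝ) (rstar : ℝ → Evec n)
    (p : ℝ → Evec r) (q : ℝ → Evec s) (y : ℝ → Evec n) : Prop :=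
  (∃ K : ℝ≥0, LipschitzOnWith K y (Icc t0 ϑ)) ∧
  (∀ t ∈ Icc t0 tstar, y t = rstar t) ∧
  (∀ᵐ t ∂(volume.restrict (Icc tstar ϑ)),
    HasDerivAt y (f t (approxState t0 α h w0 y t) (p t) (q t)) t)

/-- The initial position of the approximating system corresponding to an initial
position `(tstar, wstar(·))` of the original system:
`r*(t) = (I^{1-α}(w*(·) - w*(t0)))(t)`. -/
def rstarOf (t0 α : ℝ) {n : ℕ} (wstar : ℝ → Evec n) : ℝ → Evec n :=
  RL t0 (1 - α) (fun τ => wstar τ - wstar t0)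

/-- A non-anticipative strategy: a map from opponent control realizations (valued in `VO`)
to own control realizations (valued in `UO`) such that a.e. coincidence of inputs up to any
time implies a.e. coincidence of outputs up to that time. -/
def Nonanticipative {a b : ℕ} (tstar ϑ : ℝ) (UO : Set (Evec a)) (VO : Set (Evec b))
    (A : (ℝ → Evec b) → (ℝ → Evec a)) : Prop :=
  (∀ v, IsControl tstar ϑ VO v → IsControl tstar ϑ UO (A v)) ∧
  ∀ that ∈ Icc tstar ϑ, ∀ v v', IsControl tstar ϑ VO v → IsControl tstar ϑ VO v' →
    (∀ᵐ t ∂(volume.restrict (Icc tstar that)), v t = v' t) →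
    (∀ᵐ t ∂(volume.restrict (Icc tstar that)), A v t = A v' t)

/-- The lower value `Γ⁻(t*, w*(·)) = inf_A sup_{v(·)} σ(x(·))` of the original game. -/
def lowerValue (t0 ϑ α : ℝ) {n r s : ℕ} (U : Set (Evec r)) (V : Set (Evec s))
    (f : ℝ → Evec n → Evec r → Evec s → Evec n) (σ : (ℝ → Evec n) → ℝ)
    (tstar : ℝ) (wstar φstar : ℝ → Evec n) : ℝ :=
  sInf { a : ℝ | ∃ A : (ℝ → Evec s) → (ℝ → Evec r), Nonanticipative tstar ϑ U V A ∧
    a = sSup { g : ℝ | ∃ v x, IsControl tstar ϑ V v ∧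
      IsMotion t0 ϑ α f tstar wstar φstar (A v) v x ∧ g = σ x } }

/-- The upper value `Γ⁺(t*, w*(·)) = sup_B inf_{u(·)} σ(x(·))` of the original game. -/
def upperValue (t0 ϑ α : ℝ) {n r s : ℕ} (U : Set (Evec r)) (V : Set (Evec s))
    (f : ℝ → Evec n → Evec r → Evec s → Evec n) (σ : (ℝ → Evec n) → ℝ)
    (tstar : ℝ) (wstar φstar : ℝ → Evec n) : ℝ :=
  sSup { a : ℝ | ∃ B : (ℝ → Evec r) → (ℝ → Evec s), Nonanticipative tstar ϑ V U B ∧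
    a = sInf { g : ℝ | ∃ u x, IsControl tstar ϑ U u ∧
      IsMotion t0 ϑ α f tstar wstar φstar u (B u) x ∧ g = σ x } }

/-- The lower value of the approximating differential game with parameters `w0`, `h`,
from the initial position `(tstar, rstar(·))`. -/
def approxValue (t0 ϑ α : ℝ) {n r s : ℕ} (U : Set (Evec r)) (V : Set (Evec s))
    (f : ℝ → Evec n → Evec r → Evec s → Evec n) (σ : (ℝ → Evec n) → ℝ)
    (w0 : Evec n) (h : ℝ) (tstar : ℝ) (rstar : ℝ → Evec n) : ℝ :=
  sInf { a : ℝ | ∃ A : (ℝ → Evec s) → (ℝ → Evec r), Nonanticipative tstar ϑ U V A ∧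
    a = sSup { g : ℝ | ∃ q y, IsControl tstar ϑ V q ∧
      IsApproxMotion t0 ϑ α f w0 h tstar rstar (A q) q y ∧
      g = σ (approxState t0 α h w0 y) } }

/-- The upper value of the approximating differential game. -/
def approxUpperValue (t0 ϑ α : ℝ) {n r s : ℕ} (U : Set (Evec r)) (V : Set (Evec s))
    (f : ℝ → Evec n → Evec r → Evec s → Evec n) (σ : (ℝ → Evec n) → ℝ)
    (w0 : Evec n) (h : ℝ) (tstar : ℝ) (rstar : ℝ → Evec n) : ℝ :=
  sSup { a : ℝ | ∃ B : (ℝ → Evec r) → (ℝ → Evec s), Nonanticipative tstar ϑ V U B ∧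
    a = sInf { g : ℝ | ∃ p y, IsControl tstar ϑ U p ∧
      IsApproxMotion t0 ϑ α f w0 h tstar rstar p (B p) y ∧
      g = σ (approxState t0 α h w0 y) } }

/-- The value `Γ_h(t*, w*(·))` of the approximating game for an admissible position of the
original system. -/
def GammaH (t0 ϑ α : ℝ) {n r s : ℕ} (U : Set (Evec r)) (V : Set (Evec s))
    (f : ℝ → Evec n → Evec r → Evec s → Evec n) (σ : (ℝ → Evec n) → ℝ)
    (h : ℝ) (tstar : ℝ) (wstar : ℝ → Evec n) : ℝ :=
  approxValue t0 ϑ α U V f σ (wstar t0) h tstar (rstarOf t0 α wstar)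

/-- An admissible position `(t, rr(·)) ∈ G_h^0` of the approximating system, where
`ctilde` is the constant `c̃_h`. -/
def IsApproxAdmissiblePos (t0 ϑ : ℝ) (ctilde : ℝ) {n : ℕ} (t : ℝ) (rr : ℝ → Evec n) : Prop :=
  t ∈ Icc t0 ϑ ∧ rr t0 = 0 ∧ (∃ K : ℝ≥0, LipschitzOnWith K rr (Icc t0 t)) ∧
  ∀ᵐ τ ∂(volume.restrict (Icc t0 t)), ∀ d : Evec n, HasDerivAt rr d τ →
    ‖d‖ ≤ (1 + sSup ((fun ξ => ‖rr ξ‖) '' Icc t0 τ)) * ctilde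

/-- A partition `t* = τ_1 < τ_2 < … < τ_{k+1} = ϑ` of `[t*, ϑ]`. -/
def IsPartition (tstar ϑ : ℝ) (k : ℕ) (τ : ℕ → ℝ) : Prop :=
  1 ≤ k ∧ τ 1 = tstar ∧ τ (k + 1) = ϑ ∧ ∀ j : ℕ, 1 ≤ j → j ≤ k → τ j < τ (j + 1)

/-- `u0` attains `min_{u ∈ U} max_{v ∈ V} ⟨sv, f(t, x, u, v)⟩`. -/
def MinMaxPoint {n r s : ℕ} (U : Set (Evec r)) (V : Set (Evec s))
    (f : ℝ → Evec n → Evec r → Evec s → Evec n) (t : ℝ) (x sv : Evec n) (u0 : Evec r) : Prop :=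
  u0 ∈ U ∧ ∀ u ∈ U,
    sSup ((fun v => ⟪sv, f t x u0 v⟫) '' V) ≤ sSup ((fun v => ⟪sv, f t x u v⟫) '' V)

/-- `v0` attains `max_{v ∈ V} min_{u ∈ U} ⟨sv, f(t, x, u, v)⟩`. -/
def MaxMinPoint {n r s : ℕ} (U : Set (Evec r)) (V : Set (Evec s))
    (f : ℝ → Evec n → Evec r → Evec s → Evec n) (t : ℝ) (x sv : Evec n) (v0 : Evec s) : Prop :=
  v0 ∈ V ∧ ∀ v ∈ V,
    sInf ((fun u => ⟪sv, f t x u v⟫) '' U) ≤ sInf ((fun u => ⟪sv, f t x u v0⟫) '' U)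

/-- The first player's mutual aiming rule: on each step `[τ_j, τ_{j+1})`, with
`s_j = x(τ_j) - w0 - h^{α-1}(Δ_h^{1-α} y)(τ_j)`, the control `u` in the original system
attains the corresponding minimax and the control `q` in the guide attains the corresponding
maximin, both controls being constant on the step. -/
def FirstAiming (t0 α : ℝ) {n r s : ℕ} (U : Set (Evec r)) (V : Set (Evec s))
    (f : ℝ → Evec n → Evec r → Evec s → Evec n) (w0 : Evec n) (h : ℝ)
    (k : ℕ) (τ : ℕ → ℝ) (x y : ℝ → Evec n) (u : ℝ → Evec r) (q : ℝ → Evec s) : Prop :=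
  ∀ j : ℕ, 1 ≤ j → j ≤ k →
    MinMaxPoint U V f (τ j) (x (τ j))
      (x (τ j) - approxState t0 α h w0 y (τ j)) (u (τ j)) ∧
    MaxMinPoint U V f (τ j) (approxState t0 α h w0 y (τ j))
      (x (τ j) - approxState t0 α h w0 y (τ j)) (q (τ j)) ∧
    ∀ t ∈ Ico (τ j) (τ (j + 1)), u t = u (τ j) ∧ q t = q (τ j)

/-- The second player's mutual aiming rule: on each step `[τ_j, τ_{j+1})`, with
`s_j = w0 + h^{α-1}(Δ_h^{1-α} y)(τ_j) - x(τ_j)`, the control `v` in the original system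
attains the corresponding maximin and the control `p` in the guide attains the corresponding
minimax, both controls being constant on the step. -/
def SecondAiming (t0 α : ℝ) {n r s : ℕ} (U : Set (Evec r)) (V : Set (Evec s))
    (f : ℝ → Evec n → Evec r → Evec s → Evec n) (w0 : Evec n) (h : ℝ)
    (k : ℕ) (τ : ℕ → ℝ) (x y : ℝ → Evec n) (v : ℝ → Evec s) (p : ℝ → Evec r) : Prop :=
  ∀ j : ℕ, 1 ≤ j → j ≤ k →
    MaxMinPoint U V f (τ j) (x (τ j))
      (approxState t0 α h w0 y (τ j) - x (τ j)) (v (τ j)) ∧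
    MinMaxPoint U V f (τ j) (approxState t0 α h w0 y (τ j))
      (approxState t0 α h w0 y (τ j) - x (τ j)) (p (τ j)) ∧
    ∀ t ∈ Ico (τ j) (τ (j + 1)), v t = v (τ j) ∧ p t = p (τ j)

/-! Summation by parts rewrites `(Δ_h^{1-α} y)(t)` as `∑_k S_k (y(t - kh) - y(t - (k+1)h))`, where
the partial sums `S_k = binom(k+α-1, k)` of the Grünwald–Letnikov weights decrease, satisfy
`S_k ≤ (k+1)^{α-1}` and `∑_{k<K} S_k = K S_K / α`. For `t' < t`, split the difference of the two
sums at `K = ⌊(t - t')/h⌋`: each of the first `K` terms is at most `2 L h S_k`, while the tail is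
again summed by parts against the increments `y(t - jh) - y(t' - jh)`, all of norm at most
`L (t - t')`, costing `2 L (t - t') S_K`. After the factor `h^{α-1}` both pieces are
`O((t - t')^α)`. The uniform bound is the Hölder bound against `t0`, where `z` vanishes. -/

open Finset

lemma norm_sum_smul_sub_le_two_mul {E : Type*} [SeminormedAddCommGroup E] [NormedSpace ℝ E]
    {c : ℕ → ℝ} (hc : Antitone c) (hc0 : ∀ k, 0 ≤ c k) {g : ℕ → E} {B : ℝ}
    (hg : ∀ k, ‖g k‖ ≤ B) (M : ℕ) :
    ‖∑ k ∈ range M, c k • (g k - g (k + 1))‖ ≤ 2 * c 0 * B := by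
  have hterm : ∀ a k, 0 ≤ a → ‖a • g k‖ ≤ a * B := fun a k ha => by
    rw [norm_smul, Real.norm_of_nonneg ha]
    exact mul_le_mul_of_nonneg_left (hg k) ha
  -- summation by parts: with the boundary term added back, the weights are `c M - c (M+1) ≥ 0`
  have hclosed : ∀ M,
      ‖∑ k ∈ range M, c k • (g k - g (k + 1)) + c M • g M‖ ≤ (2 * c 0 - c M) * B := by
    intro M
    induction M with
    | zero => simpa [two_mul] using hterm (c 0) 0 (hc0 0)
    | succ M ih =>
      have hdrop : 0 ≤ c M - c (M + 1) := sub_nonneg.2 (hc M.le_succ)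
      calc ‖∑ k ∈ range (M + 1), c k • (g k - g (k + 1)) + c (M + 1) • g (M + 1)‖
          = ‖(∑ k ∈ range M, c k • (g k - g (k + 1)) + c M • g M)
              - (c M - c (M + 1)) • g (M + 1)‖ := by
            rw [sum_range_succ, smul_sub, sub_smul]
            congr 1
            abel
        _ ≤ (2 * c 0 - c M) * B + (c M - c (M + 1)) * B :=
            (norm_sub_le _ _).trans (add_le_add ih (hterm _ _ hdrop))
        _ = (2 * c 0 - c (M + 1)) * B := by ring
  calc ‖∑ k ∈ range M, c k • (g k - g (k + 1))‖
      = ‖(∑ k ∈ range M, c k • (g k - g (k + 1)) + c M • g M) - c M • g M‖ := by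
        rw [add_sub_cancel_right]
    _ ≤ (2 * c 0 - c M) * B + c M * B :=
        (norm_sub_le _ _).trans (add_le_add (hclosed M) (hterm _ _ (hc0 M)))
    _ = 2 * c 0 * B := by ring

-- `∏_{m<j} (α+m)/(m+1) = binom(j+α-1, j)`: the `j`-th partial sum of the weights
-- `(-1)^i binom(1-α, i)` of `glDiff` (see `neg_one_pow_mul_glCoef_succ`).
def glPartialSum (α : ℝ) (j : ℕ) : ℝ := ∏ m ∈ range j, (α + m) / (m + 1)

@[simp]
lemma glPartialSum_zero (α : ℝ) : glPartialSum α 0 = 1 := by simp [glPartialSum]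

lemma glPartialSum_succ (α : ℝ) (j : ℕ) :
    glPartialSum α (j + 1) = glPartialSum α j * ((α + j) / (j + 1)) :=
  prod_range_succ _ _

lemma glCoef_succ (β : ℝ) (i : ℕ) : glCoef β (i + 1) = glCoef β i * ((β - i) / (i + 1)) :=
  prod_range_succ _ _

lemma neg_one_pow_mul_glCoef_succ (α : ℝ) (i : ℕ) :
    (-1) ^ (i + 1) * glCoef (1 - α) (i + 1) = glPartialSum α (i + 1) - glPartialSum α i := by
  suffices h : (-1) ^ (i + 1) * glCoef (1 - α) (i + 1)
      = glPartialSum α i * ((α - 1) / (i + 1)) by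
    rw [h, glPartialSum_succ]
    field_simp
    ring
  induction i with
  | zero => simp [glCoef]
  | succ i ih =>
    rw [glCoef_succ, pow_succ, mul_mul_mul_comm, ih, glPartialSum_succ]
    push_cast
    field_simp
    ring

lemma glPartialSum_nonneg {α : ℝ} (hα : 0 ≤ α) (j : ℕ) : 0 ≤ glPartialSum α j :=
  prod_nonneg fun _ _ => by positivity

lemma glPartialSum_antitone {α : ℝ} (hα0 : 0 ≤ α) (hα1 : α ≤ 1) : Antitone (glPartialSum α) :=
  antitone_nat_of_succ_le fun j => by
    rw [glPartialSum_succ]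
    refine mul_le_of_le_one_right (prod_nonneg fun _ _ => by positivity) ?_
    rw [div_le_one (by positivity)]
    linarith

lemma mul_sum_range_glPartialSum (α : ℝ) (K : ℕ) :
    α * ∑ k ∈ range K, glPartialSum α k = K * glPartialSum α K := by
  induction K with
  | zero => simp
  | succ K ih =>
    rw [sum_range_succ, mul_add, ih, glPartialSum_succ]
    push_cast
    field_simp
    ring

-- Bernoulli: `(1 + 1/(j+1))^(1-α) ≤ 1 + (1-α)/(j+1)`, and `(j+α)(j+2-α) ≤ (j+1)^2`.
lemma glPartialSum_mul_rpow_le_one {α : ℝ} (hα0 : 0 ≤ α) (hα1 : α ≤ 1) (j : ℕ) :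
    glPartialSum α j * ((j : ℝ) + 1) ^ (1 - α) ≤ 1 := by
  induction j with
  | zero => simp
  | succ j ih =>
    have hbern : (1 + 1 / ((j : ℝ) + 1)) ^ (1 - α) ≤ 1 + (1 - α) * (1 / (j + 1)) :=
      rpow_one_add_le_one_add_mul_self (by linarith [show (0 : ℝ) ≤ 1 / (j + 1) by positivity])
        (by linarith) (by linarith)
    have hsplit : ((↑(j + 1) : ℝ) + 1) ^ (1 - α)
        = ((j : ℝ) + 1) ^ (1 - α) * (1 + 1 / ((j : ℝ) + 1)) ^ (1 - α) := by
      rw [← Real.mul_rpow (by positivity) (by positivity)]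
      congr 1
      push_cast
      field_simp
    have hfactor : (α + j) / (j + 1) * (1 + 1 / ((j : ℝ) + 1)) ^ (1 - α) ≤ 1 := by
      calc (α + j) / (j + 1) * (1 + 1 / ((j : ℝ) + 1)) ^ (1 - α)
          ≤ (α + j) / (j + 1) * (1 + (1 - α) * (1 / (j + 1))) := by gcongr
        _ ≤ 1 := by
          rw [div_mul_eq_mul_div, div_le_one (by positivity)]
          field_simp
          nlinarith
    calc glPartialSum α (j + 1) * ((↑(j + 1) : ℝ) + 1) ^ (1 - α)
        = (glPartialSum α j * ((j : ℝ) + 1) ^ (1 - α))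
          * ((α + j) / (j + 1) * (1 + 1 / ((j : ℝ) + 1)) ^ (1 - α)) := by
          rw [glPartialSum_succ, hsplit]
          ring
      _ ≤ 1 * 1 := mul_le_mul ih hfactor (by positivity) zero_le_one
      _ = 1 := one_mul 1

lemma glPartialSum_le_rpow {α : ℝ} (hα0 : 0 ≤ α) (hα1 : α ≤ 1) (j : ℕ) :
    glPartialSum α j ≤ ((j : ℝ) + 1) ^ (α - 1) := by
  rw [← neg_sub, Real.rpow_neg (by positivity), ← one_div, le_div_iff₀ (by positivity)]
  exact glPartialSum_mul_rpow_le_one hα0 hα1 j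

lemma sum_glCoef_smul_eq_sum_glPartialSum_smul_sub {E : Type*} [AddCommGroup E] [Module ℝ E]
    (α : ℝ) (v : ℕ → E) (M : ℕ) :
    ∑ i ∈ range (M + 1), ((-1 : ℝ) ^ i * glCoef (1 - α) i) • v i
      = ∑ k ∈ range M, glPartialSum α k • (v k - v (k + 1)) + glPartialSum α M • v M := by
  induction M with
  | zero => simp [glCoef]
  | succ M ih =>
    rw [sum_range_succ, ih, sum_range_succ, neg_one_pow_mul_glCoef_succ, sub_smul, smul_sub]
    abel

def glSample (t0 h : ℝ) {E : Type*} (y : ℝ → E) (t : ℝ) (j : ℕ) : E := y (max (t - j * h) t0)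

section

variable {E : Type*} {t0 h t : ℝ} {y : ℝ → E} {j : ℕ}

lemma glSample_of_le_floor (hh : 0 < h) (ht : t0 ≤ t) (hj : j ≤ ⌊(t - t0) / h⌋₊) :
    glSample t0 h y t j = y (t - j * h) := by
  rw [Nat.le_floor_iff (div_nonneg (sub_nonneg.2 ht) hh.le), le_div_iff₀ hh] at hj
  rw [glSample, max_eq_left (by linarith)]

lemma glSample_of_floor_lt [Zero E] (hy0 : y t0 = 0) (hh : 0 < h)
    (hj : ⌊(t - t0) / h⌋₊ < j) :
    glSample t0 h y t j = 0 := by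
  have := Nat.lt_of_floor_lt hj
  rw [div_lt_iff₀ hh] at this
  rw [glSample, max_eq_right (by linarith), hy0]

end

section

variable {α h t0 t ϑ L : ℝ} {n : ℕ} {y : ℝ → Evec n}

lemma glDiff_self (hy0 : y t0 = 0) : glDiff t0 α h y t0 = 0 := by
  simp [glDiff, hy0]

-- with `y t0 = 0` the samples past `⌊(t - t0)/h⌋` vanish, so any longer range gives the same sum
lemma glDiff_eq_sum_glPartialSum_smul (hy0 : y t0 = 0) (hh : 0 < h) (ht : t0 ≤ t) {M : ℕ}
    (hM : ⌊(t - t0) / h⌋₊ < M) :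
    glDiff t0 α h y t = ∑ k ∈ range M,
      glPartialSum α k • (glSample t0 h y t k - glSample t0 h y t (k + 1)) := by
  have hext : glDiff t0 α h y t
      = ∑ i ∈ range (M + 1), ((-1 : ℝ) ^ i * glCoef (1 - α) i) • glSample t0 h y t i := by
    refine sum_subset_zero_on_sdiff (range_subset_range.2 (by omega)) (fun i hi => ?_)
      (fun i hi => ?_)
    · simp only [Finset.mem_sdiff, Finset.mem_range, not_lt] at hi
      rw [glSample_of_floor_lt hy0 hh hi.2, smul_zero]
    · rw [glSample_of_le_floor hh ht (Nat.lt_succ_iff.1 (Finset.mem_range.1 hi))]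
  rw [hext, sum_glCoef_smul_eq_sum_glPartialSum_smul_sub, glSample_of_floor_lt hy0 hh hM,
    smul_zero, add_zero]

lemma norm_glSample_sub_glSample_le (hϑ : t0 ≤ ϑ) (hL : 0 ≤ L)
    (hyL : ∀ t ∈ Icc t0 ϑ, ∀ t' ∈ Icc t0 ϑ, ‖y t - y t'‖ ≤ L * |t - t'|) (hh : 0 ≤ h)
    {s s' : ℝ} (hs : s ≤ ϑ) (hs' : s' ≤ ϑ) (j j' : ℕ) :
    ‖glSample t0 h y s j - glSample t0 h y s' j'‖ ≤ L * |(s - j * h) - (s' - j' * h)| := by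
  have hmem : ∀ r ≤ ϑ, ∀ i : ℕ, max (r - i * h) t0 ∈ Icc t0 ϑ := fun r hr i =>
    ⟨le_max_right _ _, max_le (by nlinarith [(Nat.cast_nonneg i : (0 : ℝ) ≤ i)]) hϑ⟩
  exact (hyL _ (hmem s hs j) _ (hmem s' hs' j')).trans
    (mul_le_mul_of_nonneg_left (abs_max_sub_max_le_abs _ _ _) hL)

lemma norm_glSample_sub_glSample_succ_le (hϑ : t0 ≤ ϑ) (hL : 0 ≤ L)
    (hyL : ∀ t ∈ Icc t0 ϑ, ∀ t' ∈ Icc t0 ϑ, ‖y t - y t'‖ ≤ L * |t - t'|) (hh : 0 ≤ h)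
    {s : ℝ} (hs : s ≤ ϑ) (k : ℕ) :
    ‖glSample t0 h y s k - glSample t0 h y s (k + 1)‖ ≤ L * h := by
  have := norm_glSample_sub_glSample_le hϑ hL hyL hh hs hs k (k + 1)
  rwa [Nat.cast_succ, show s - k * h - (s - (k + 1) * h) = h by ring, abs_of_nonneg hh] at this

lemma norm_glDiff_sub_glDiff_le (hα0 : 0 ≤ α) (hα1 : α ≤ 1) (hy0 : y t0 = 0) (hL : 0 ≤ L)
    (hyL : ∀ t ∈ Icc t0 ϑ, ∀ t' ∈ Icc t0 ϑ, ‖y t - y t'‖ ≤ L * |t - t'|) (hh : 0 < h)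
    {t' : ℝ} (ht' : t0 ≤ t') (htt : t' ≤ t) (ht : t ≤ ϑ) (K : ℕ) :
    ‖glDiff t0 α h y t - glDiff t0 α h y t'‖ ≤
      2 * L * h * ∑ k ∈ range K, glPartialSum α k + 2 * glPartialSum α K * (L * (t - t')) := by
  set N := ⌊(t - t0) / h⌋₊
  have hN' : ⌊(t' - t0) / h⌋₊ < K + (N + 1) := by
    have : ⌊(t' - t0) / h⌋₊ ≤ N := Nat.floor_le_floor (by gcongr)
    omega
  set g : ℕ → Evec n := fun j => glSample t0 h y t j - glSample t0 h y t' j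
  have hϑ : t0 ≤ ϑ := ht'.trans (htt.trans ht)
  have hstep : ∀ k, ‖g k - g (k + 1)‖ ≤ 2 * L * h := fun k => by
    rw [sub_sub_sub_comm, two_mul, add_mul]
    exact (norm_sub_le _ _).trans (add_le_add
      (norm_glSample_sub_glSample_succ_le hϑ hL hyL hh.le ht k)
      (norm_glSample_sub_glSample_succ_le hϑ hL hyL hh.le (htt.trans ht) k))
  have hg : ∀ j, ‖g j‖ ≤ L * (t - t') := fun j => by
    simpa [abs_of_nonneg (sub_nonneg.2 htt)] using
      norm_glSample_sub_glSample_le hϑ hL hyL hh.le ht (htt.trans ht) j j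
  have hdiff : glDiff t0 α h y t - glDiff t0 α h y t'
      = ∑ k ∈ range (K + (N + 1)), glPartialSum α k • (g k - g (k + 1)) := by
    rw [glDiff_eq_sum_glPartialSum_smul hy0 hh (ht'.trans htt) (M := K + (N + 1)) (by omega),
      glDiff_eq_sum_glPartialSum_smul hy0 hh ht' hN', ← sum_sub_distrib]
    exact sum_congr rfl fun k _ => by rw [← smul_sub, sub_sub_sub_comm]
  rw [hdiff, sum_range_add]
  refine (norm_add_le _ _).trans (add_le_add ?_ ?_)
  · rw [mul_sum]
    refine (norm_sum_le _ _).trans (sum_le_sum fun k _ => ?_)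
    rw [norm_smul, Real.norm_of_nonneg (glPartialSum_nonneg hα0 k)]
    nlinarith [hstep k, glPartialSum_nonneg hα0 k]
  · exact norm_sum_smul_sub_le_two_mul (g := fun j => g (K + j))
      ((glPartialSum_antitone hα0 hα1).comp_monotone fun _ _ h => Nat.add_le_add_left h K)
      (fun k => glPartialSum_nonneg hα0 _) (fun j => hg (K + j)) (N + 1)

lemma rpow_mul_glPartialSum_floor_le (hα0 : 0 ≤ α) (hα1 : α ≤ 1) (hh : 0 < h) {δ : ℝ}
    (hδ : 0 < δ) : h ^ (α - 1) * glPartialSum α ⌊δ / h⌋₊ ≤ δ ^ (α - 1) := by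
  have hδK : δ < (⌊δ / h⌋₊ + 1) * h := (div_lt_iff₀ hh).1 (Nat.lt_floor_add_one _)
  calc h ^ (α - 1) * glPartialSum α ⌊δ / h⌋₊
      ≤ h ^ (α - 1) * ((⌊δ / h⌋₊ : ℝ) + 1) ^ (α - 1) := by
        gcongr
        exact glPartialSum_le_rpow hα0 hα1 _
    _ = ((⌊δ / h⌋₊ + 1) * h) ^ (α - 1) := by rw [Real.mul_rpow (by positivity) hh.le, mul_comm]
    _ ≤ δ ^ (α - 1) := Real.rpow_le_rpow_of_nonpos hδ hδK.le (by linarith)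

lemma norm_smul_glDiff_sub_le_of_le (hα0 : 0 < α) (hα1 : α ≤ 1) (hy0 : y t0 = 0) (hL : 0 ≤ L)
    (hyL : ∀ t ∈ Icc t0 ϑ, ∀ t' ∈ Icc t0 ϑ, ‖y t - y t'‖ ≤ L * |t - t'|) (hh : 0 < h)
    {t' : ℝ} (ht' : t0 ≤ t') (htt : t' ≤ t) (ht : t ≤ ϑ) :
    ‖h ^ (α - 1) • glDiff t0 α h y t - h ^ (α - 1) • glDiff t0 α h y t'‖
      ≤ 2 * L * (1 + 1 / α) * (t - t') ^ α := by
  rcases htt.eq_or_lt with rfl | hlt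
  · simp [Real.zero_rpow hα0.ne']
  set δ := t - t'
  have hδ : 0 < δ := sub_pos.2 hlt
  set K := ⌊δ / h⌋₊
  have hK : K * h ≤ δ := (le_div_iff₀ hh).1 (Nat.floor_le (by positivity))
  have hsum : ∑ k ∈ range K, glPartialSum α k = K * glPartialSum α K / α := by
    rw [eq_div_iff hα0.ne', mul_comm, mul_sum_range_glPartialSum]
  have hS := glPartialSum_nonneg hα0.le K
  rw [← smul_sub, norm_smul, Real.norm_of_nonneg (by positivity)]
  calc h ^ (α - 1) * ‖glDiff t0 α h y t - glDiff t0 α h y t'‖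
      ≤ h ^ (α - 1) * (2 * L * h * ∑ k ∈ range K, glPartialSum α k
          + 2 * glPartialSum α K * (L * δ)) := by
        gcongr
        exact norm_glDiff_sub_glDiff_le hα0.le hα1 hy0 hL hyL hh ht' htt ht K
    _ = 2 * L * (h ^ (α - 1) * glPartialSum α K) * (K * h / α + δ) := by rw [hsum]; ring
    _ ≤ 2 * L * δ ^ (α - 1) * (δ / α + δ) := by
        gcongr
        exact rpow_mul_glPartialSum_floor_le hα0.le hα1 hh hδ
    _ = 2 * L * (1 + 1 / α) * δ ^ α := by
        rw [Real.rpow_sub_one hδ.ne']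
        field_simp
        ring

lemma norm_smul_glDiff_sub_le (hα0 : 0 < α) (hα1 : α ≤ 1) (hy0 : y t0 = 0) (hL : 0 ≤ L)
    (hyL : ∀ t ∈ Icc t0 ϑ, ∀ t' ∈ Icc t0 ϑ, ‖y t - y t'‖ ≤ L * |t - t'|) (hh : 0 < h)
    {t' : ℝ} (ht : t ∈ Icc t0 ϑ) (ht' : t' ∈ Icc t0 ϑ) :
    ‖h ^ (α - 1) • glDiff t0 α h y t - h ^ (α - 1) • glDiff t0 α h y t'‖
      ≤ 2 * L * (1 + 1 / α) * |t - t'| ^ α := by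
  rcases le_total t' t with htt | htt
  · rw [abs_of_nonneg (sub_nonneg.2 htt)]
    exact norm_smul_glDiff_sub_le_of_le hα0 hα1 hy0 hL hyL hh ht'.1 htt ht.2
  · rw [norm_sub_rev, abs_sub_comm, abs_of_nonneg (sub_nonneg.2 htt)]
    exact norm_smul_glDiff_sub_le_of_le hα0 hα1 hy0 hL hyL hh ht.1 htt ht'.2

end

theorem glDiff_uniform_bounds_general
    (t0 ϑ : ℝ) (hT : t0 < ϑ) (n : ℕ) (α : ℝ) (hα : α ∈ Set.Ioo (0 : ℝ) 1) :
    ∀ L > (0 : ℝ), ∃ R2 > (0 : ℝ), ∃ H2 > (0 : ℝ), ∀ h > (0 : ℝ),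
      ∀ y : ℝ → Evec n, y t0 = 0 →
      (∀ t ∈ Icc t0 ϑ, ∀ t' ∈ Icc t0 ϑ, ‖y t - y t'‖ ≤ L * |t - t'|) →
      ∀ t ∈ Icc t0 ϑ,
        ‖(h ^ (α - 1)) • glDiff t0 α h y t‖ ≤ R2 ∧
        ∀ t' ∈ Icc t0 ϑ,
          ‖(h ^ (α - 1)) • glDiff t0 α h y t - (h ^ (α - 1)) • glDiff t0 α h y t'‖
            ≤ H2 * |t - t'| ^ α := by
  obtain ⟨hα0, hα1⟩ := hα
  intro L hL
  have hH2 : 0 < 2 * L * (1 + 1 / α) := by positivity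
  refine ⟨2 * L * (1 + 1 / α) * (ϑ - t0) ^ α, by have := sub_pos.2 hT; positivity, _, hH2,
    fun h hh y hy0 hyL t ht => ⟨?_, fun t' ht' =>
      norm_smul_glDiff_sub_le hα0 hα1.le hy0 hL.le hyL hh ht ht'⟩⟩
  calc ‖h ^ (α - 1) • glDiff t0 α h y t‖
      = ‖h ^ (α - 1) • glDiff t0 α h y t - h ^ (α - 1) • glDiff t0 α h y t0‖ := by
        rw [glDiff_self hy0, smul_zero, sub_zero]
    _ ≤ 2 * L * (1 + 1 / α) * |t - t0| ^ α :=
        norm_smul_glDiff_sub_le hα0 hα1.le hy0 hL.le hyL hh ht (left_mem_Icc.2 hT.le)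
    _ ≤ 2 * L * (1 + 1 / α) * (ϑ - t0) ^ α := by
        rw [abs_of_nonneg (sub_nonneg.2 ht.1)]
        gcongr
        exacts [sub_nonneg.2 ht.1, ht.2]

/-- cf. [Gomoyunov 2018, Proposition 7]: for every `L > 0` there exist
`R2, H2 > 0`, depending only on `α, t0, ϑ, L`, bounding `z(t) = h^{α-1}(Δ_h^{1-α}y)(t)`
and its Hölder modulus, for every `h > 0` and every `y` vanishing at `t0` that is
Lipschitz with constant `L`. -/
theorem glDiff_uniform_bounds
    (t0 ϑ : ℝ) (hT : t0 < ϑ) (n : ℕ) (hn : 1 ≤ n) (α : ℝ) (hα : α ∈ Set.Ioo (0 : ℝ) 1) :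
    ∀ L > (0 : ℝ), ∃ R2 > (0 : ℝ), ∃ H2 > (0 : ℝ), ∀ h > (0 : ℝ),
      ∀ y : ℝ → Evec n, y t0 = 0 →
      (∀ t ∈ Icc t0 ϑ, ∀ t' ∈ Icc t0 ϑ, ‖y t - y t'‖ ≤ L * |t - t'|) →
      ∀ t ∈ Icc t0 ϑ,
        ‖(h ^ (α - 1)) • glDiff t0 α h y t‖ ≤ R2 ∧
        ∀ t' ∈ Icc t0 ϑ,
          ‖(h ^ (α - 1)) • glDiff t0 α h y t - (h ^ (α - 1)) • glDiff t0 α h y t'‖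
            ≤ H2 * |t - t'| ^ α :=
  glDiff_uniform_bounds_general t0 ϑ hT n α hα
end
end

section
/- Assume (A.2) and (A.3), and fix R0 > 0. Then for every h > 0 there exists c_h > 0 such that ‖f(t, w0 + h^{α−1}(Δ_h^{1−α} r)(t), p, q)‖ ≤ (1 + max_{τ∈[t0,t]} ‖r(τ)‖)·c_h for all w0 ∈ ℝ^n with ‖w0‖ ≤ R0, all t ∈ [t0,ϑ], all Lipschitz continuous r : [t0,t] → ℝ^n with r(t0) = 0, and all p ∈ U, q ∈ V. Moreover, for every h > 0 and every R ≥ 0 there exists λ_h > 0 such that ‖f(t, w0 + h^{α−1}(Δ_h^{1−α} r)(t), p, q) − f(t, w0 + h^{α−1}(Δ_h^{1−α} r′)(t), p, q)‖ ≤ λ_h·max_{τ∈[t0,t]} ‖r(τ) − r′(τ)‖ for all such w0, t, p, q and all Lipschitz continuous r, r′ : [t0,t] → ℝ^n vanishing at t0 with max_{[t0,t]}‖r‖ ≤ R and max_{[t0,t]}‖r′‖ ≤ R. -/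
open MeasureTheory Set
open scoped RealInnerProductSpace NNReal

noncomputable section

/-! On `[t0, ϑ]` the map `y ↦ h^{α-1} (Δ_h^{1-α} y)(t)` only samples `y` at the finitely many
points `t - i h ∈ [t0, t]`, so it is bounded by `glConst t0 ϑ α h` times `max_{[t0,t]} ‖y‖`, with a
constant independent of `t`. Composing this linear bound with the growth bound (A.3) and, on the
ball of radius `R0 + glConst · R`, with the Lipschitz bound (A.2) gives both conditions. -/

section GrunwaldLetnikov

variable {n : ℕ} {t0 ϑ α h t M : ℝ}

def glConst (t0 ϑ α h : ℝ) : ℝ :=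
  h ^ (α - 1) * ∑ i ∈ Finset.range (⌊(ϑ - t0) / h⌋₊ + 1), |glCoef (1 - α) i|

lemma glConst_pos (hh : 0 < h) : 0 < glConst t0 ϑ α h := by
  have hsum : (1 : ℝ) ≤ ∑ i ∈ Finset.range (⌊(ϑ - t0) / h⌋₊ + 1), |glCoef (1 - α) i| := by
    calc (1 : ℝ) = |glCoef (1 - α) 0| := by simp [glCoef]
      _ ≤ _ := Finset.single_le_sum (f := fun i => |glCoef (1 - α) i|)
          (fun i _ => abs_nonneg _) (Finset.mem_range.mpr (Nat.succ_pos _))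
  exact mul_pos (Real.rpow_pos_of_pos hh _) (by linarith)

lemma sub_nat_mul_mem_Icc_of_le_floor (ht : t0 ≤ t) (hh : 0 < h) {i : ℕ}
    (hi : i ≤ ⌊(t - t0) / h⌋₊) : t - i * h ∈ Icc t0 t := by
  have hih : (i : ℝ) * h ≤ t - t0 := by
    rw [← le_div_iff₀ hh]
    exact (Nat.cast_le.mpr hi).trans (Nat.floor_le (div_nonneg (sub_nonneg.mpr ht) hh.le))
  constructor <;> nlinarith [(Nat.cast_nonneg i : (0 : ℝ) ≤ i)]

lemma norm_glDiff_le (ht : t0 ≤ t) (hh : 0 < h) {y : ℝ → Evec n}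
    (hy : ∀ τ ∈ Icc t0 t, ‖y τ‖ ≤ M) :
    ‖glDiff t0 α h y t‖
      ≤ (∑ i ∈ Finset.range (⌊(t - t0) / h⌋₊ + 1), |glCoef (1 - α) i|) * M := by
  rw [glDiff, Finset.sum_mul]
  refine (norm_sum_le _ _).trans (Finset.sum_le_sum fun i hi => ?_)
  rw [norm_smul, norm_mul, norm_pow, norm_neg, norm_one, one_pow, one_mul, Real.norm_eq_abs]
  exact mul_le_mul_of_nonneg_left
    (hy _ (sub_nat_mul_mem_Icc_of_le_floor ht hh (Nat.lt_succ_iff.mp (Finset.mem_range.mp hi))))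
    (abs_nonneg _)

lemma norm_smul_glDiff_le (ht : t ∈ Icc t0 ϑ) (hh : 0 < h) {y : ℝ → Evec n}
    (hy : ∀ τ ∈ Icc t0 t, ‖y τ‖ ≤ M) :
    ‖h ^ (α - 1) • glDiff t0 α h y t‖ ≤ glConst t0 ϑ α h * M := by
  have hM : 0 ≤ M := (norm_nonneg _).trans (hy t0 (left_mem_Icc.mpr ht.1))
  have hsum : (∑ i ∈ Finset.range (⌊(t - t0) / h⌋₊ + 1), |glCoef (1 - α) i|)
      ≤ ∑ i ∈ Finset.range (⌊(ϑ - t0) / h⌋₊ + 1), |glCoef (1 - α) i| :=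
    Finset.sum_le_sum_of_subset_of_nonneg
      (Finset.range_subset_range.mpr (Nat.succ_le_succ (Nat.floor_mono (by gcongr; exact ht.2))))
      (fun i _ _ => abs_nonneg _)
  rw [norm_smul, Real.norm_of_nonneg (Real.rpow_pos_of_pos hh _).le, glConst, mul_assoc]
  gcongr
  exact (norm_glDiff_le ht.1 hh hy).trans (by gcongr)

lemma glDiff_sub (y y' : ℝ → Evec n) :
    glDiff t0 α h (y - y') t = glDiff t0 α h y t - glDiff t0 α h y' t := by
  simp only [glDiff, Pi.sub_apply, smul_sub, Finset.sum_sub_distrib]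

end GrunwaldLetnikov

section ApproxState

variable {n : ℕ} {t0 ϑ α h t : ℝ}

lemma norm_le_sSup_image_norm {E : Type*} [NormedAddCommGroup E] {g : ℝ → E} {s : Set ℝ}
    (hs : IsCompact s) (hg : ContinuousOn g s) {τ : ℝ} (hτ : τ ∈ s) :
    ‖g τ‖ ≤ sSup ((fun τ => ‖g τ‖) '' s) :=
  le_csSup (hs.bddAbove_image hg.norm) (mem_image_of_mem _ hτ)

lemma norm_approxState_le (ht : t ∈ Icc t0 ϑ) (hh : 0 < h) (w0 : Evec n) {y : ℝ → Evec n}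
    (hy : ContinuousOn y (Icc t0 t)) :
    ‖approxState t0 α h w0 y t‖
      ≤ ‖w0‖ + glConst t0 ϑ α h * sSup ((fun τ => ‖y τ‖) '' Icc t0 t) := by
  rw [approxState]
  grw [norm_add_le,
    norm_smul_glDiff_le ht hh fun _ hτ => norm_le_sSup_image_norm isCompact_Icc hy hτ]

lemma norm_approxState_sub_le (ht : t ∈ Icc t0 ϑ) (hh : 0 < h) (w0 : Evec n)
    {y y' : ℝ → Evec n} (hy : ContinuousOn y (Icc t0 t)) (hy' : ContinuousOn y' (Icc t0 t)) :
    ‖approxState t0 α h w0 y t - approxState t0 α h w0 y' t‖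
      ≤ glConst t0 ϑ α h * sSup ((fun τ => ‖y τ - y' τ‖) '' Icc t0 t) := by
  have hdiff : approxState t0 α h w0 y t - approxState t0 α h w0 y' t
      = h ^ (α - 1) • glDiff t0 α h (y - y') t := by
    rw [glDiff_sub, approxState, approxState, smul_sub, add_sub_add_left_eq_sub]
  rw [hdiff]
  exact norm_smul_glDiff_le ht hh fun _ hτ =>
    norm_le_sSup_image_norm (g := y - y') isCompact_Icc (hy.sub hy') hτ

end ApproxState

theorem approx_dynamics_conditions_general
    (t0 ϑ : ℝ) (n : ℕ) (α : ℝ)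
    (r s : ℕ)
    (U : Set (Evec r)) (V : Set (Evec s))
    (f : ℝ → Evec n → Evec r → Evec s → Evec n)
    (hA2 : CondA2 t0 ϑ U V f) (c : ℝ) (hc : 0 < c) (hA3 : CondA3 t0 ϑ U V f c)
    (R0 : ℝ) (hR0 : 0 < R0) :
    (∀ h > (0 : ℝ), ∃ ch > (0 : ℝ), ∀ w0 : Evec n, ‖w0‖ ≤ R0 → ∀ t ∈ Icc t0 ϑ,
      ∀ rr : ℝ → Evec n, (∃ K : ℝ≥0, LipschitzOnWith K rr (Icc t0 t)) → rr t0 = 0 →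
      ∀ p ∈ U, ∀ q ∈ V,
        ‖f t (approxState t0 α h w0 rr t) p q‖
          ≤ (1 + sSup ((fun τ => ‖rr τ‖) '' Icc t0 t)) * ch) ∧
    (∀ h > (0 : ℝ), ∀ R : ℝ, 0 ≤ R → ∃ lamh > (0 : ℝ), ∀ w0 : Evec n, ‖w0‖ ≤ R0 →
      ∀ t ∈ Icc t0 ϑ, ∀ rr rr' : ℝ → Evec n,
      (∃ K : ℝ≥0, LipschitzOnWith K rr (Icc t0 t)) → rr t0 = 0 →
      (∃ K : ℝ≥0, LipschitzOnWith K rr' (Icc t0 t)) → rr' t0 = 0 →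
      sSup ((fun τ => ‖rr τ‖) '' Icc t0 t) ≤ R →
      sSup ((fun τ => ‖rr' τ‖) '' Icc t0 t) ≤ R →
      ∀ p ∈ U, ∀ q ∈ V,
        ‖f t (approxState t0 α h w0 rr t) p q - f t (approxState t0 α h w0 rr' t) p q‖
          ≤ lamh * sSup ((fun τ => ‖rr τ - rr' τ‖) '' Icc t0 t)) := by
  constructor
  · intro h hh
    have hC := glConst_pos (t0 := t0) (ϑ := ϑ) (α := α) hh
    refine ⟨(1 + R0 + glConst t0 ϑ α h) * c, by positivity, ?_⟩
    rintro w0 hw0 t ht rr ⟨K, hK⟩ - p hp q hq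
    set M := sSup ((fun τ => ‖rr τ‖) '' Icc t0 t)
    have hM : 0 ≤ M := Real.sSup_nonneg (by rintro _ ⟨τ, -, rfl⟩; exact norm_nonneg _)
    have hx := norm_approxState_le (α := α) ht hh w0 hK.continuousOn
    calc _ ≤ (1 + ‖approxState t0 α h w0 rr t‖) * c := hA3 t ht _ p hp q hq
      _ ≤ (1 + (R0 + glConst t0 ϑ α h * M)) * c := by gcongr; linarith
      _ ≤ ((1 + M) * (1 + R0 + glConst t0 ϑ α h)) * c := by gcongr; nlinarith
      _ = _ := by ring
  · intro h hh R hR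
    have hC := glConst_pos (t0 := t0) (ϑ := ϑ) (α := α) hh
    obtain ⟨lam, hlam, hlip⟩ := hA2 (R0 + glConst t0 ϑ α h * R) (by positivity)
    refine ⟨lam * glConst t0 ϑ α h, mul_pos hlam hC, ?_⟩
    rintro w0 hw0 t ht rr rr' ⟨K, hK⟩ - ⟨K', hK'⟩ - hR1 hR2 p hp q hq
    have hx := norm_approxState_le (α := α) ht hh w0 hK.continuousOn
    have hx' := norm_approxState_le (α := α) ht hh w0 hK'.continuousOn
    calc _ ≤ lam * ‖approxState t0 α h w0 rr t - approxState t0 α h w0 rr' t‖ :=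
          hlip t ht _ _ (by nlinarith) (by nlinarith) p hp q hq
      _ ≤ _ := by
          rw [mul_assoc]
          exact mul_le_mul_of_nonneg_left
            (norm_approxState_sub_le ht hh w0 hK.continuousOn hK'.continuousOn) hlam.le

/-- conditions (B.2), (B.3): the right-hand side of the approximating system
satisfies, uniformly in `‖w0‖ ≤ R0`, a sublinear bound with constant `c_h` and a Lipschitz
condition in the history with constant `λ_h`. -/
theorem approx_dynamics_conditions
    (t0 ϑ : ℝ) (hT : t0 < ϑ) (n : ℕ) (hn : 1 ≤ n) (α : ℝ) (hα : α ∈ Set.Ioo (0 : ℝ) 1)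
    (r s : ℕ) (hr : 1 ≤ r) (hs : 1 ≤ s)
    (U : Set (Evec r)) (V : Set (Evec s)) (hUc : IsCompact U) (hUne : U.Nonempty)
    (hVc : IsCompact V) (hVne : V.Nonempty)
    (f : ℝ → Evec n → Evec r → Evec s → Evec n)
    (hA2 : CondA2 t0 ϑ U V f) (c : ℝ) (hc : 0 < c) (hA3 : CondA3 t0 ϑ U V f c)
    (R0 : ℝ) (hR0 : 0 < R0) :
    (∀ h > (0 : ℝ), ∃ ch > (0 : ℝ), ∀ w0 : Evec n, ‖w0‖ ≤ R0 → ∀ t ∈ Icc t0 ϑ,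
      ∀ rr : ℝ → Evec n, (∃ K : ℝ≥0, LipschitzOnWith K rr (Icc t0 t)) → rr t0 = 0 →
      ∀ p ∈ U, ∀ q ∈ V,
        ‖f t (approxState t0 α h w0 rr t) p q‖
          ≤ (1 + sSup ((fun τ => ‖rr τ‖) '' Icc t0 t)) * ch) ∧
    (∀ h > (0 : ℝ), ∀ R : ℝ, 0 ≤ R → ∃ lamh > (0 : ℝ), ∀ w0 : Evec n, ‖w0‖ ≤ R0 →
      ∀ t ∈ Icc t0 ϑ, ∀ rr rr' : ℝ → Evec n,
      (∃ K : ℝ≥0, LipschitzOnWith K rr (Icc t0 t)) → rr t0 = 0 →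
      (∃ K : ℝ≥0, LipschitzOnWith K rr' (Icc t0 t)) → rr' t0 = 0 →
      sSup ((fun τ => ‖rr τ‖) '' Icc t0 t) ≤ R →
      sSup ((fun τ => ‖rr' τ‖) '' Icc t0 t) ≤ R →
      ∀ p ∈ U, ∀ q ∈ V,
        ‖f t (approxState t0 α h w0 rr t) p q - f t (approxState t0 α h w0 rr' t) p q‖
          ≤ lamh * sSup ((fun τ => ‖rr τ - rr' τ‖) '' Icc t0 t)) :=
  approx_dynamics_conditions_general t0 ϑ n α r s U V f hA2 c hc hA3 R0 hR0
end
end
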